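/- arXiv:1601.00741 — 4 statements merged into one kernel-verified Lean document; each statement's English description precedes it below -/
import Mathlib

section
/- Let H be a real inner product space, w* ∈ H, C ≥ 0, T ≥ 1, and α ∈ (0,1]. For t = 1,…,T let p_t, q_t, b_t ∈ H with ‖p_t‖ ≤ C, ‖q_t‖ ≤ C, ‖b_t‖ ≤ C, and let ξ_t ∈ ℝ. Define weights by w_1 = 0 and w_{t+1} = w_t + b_t − q_t. Assume the prediction condition ⟪w_t, q_t⟫ ≥ ⟪w_t, b_t⟫ holds for all t, and the strictly α-informative feedback condition ⟪w*, b_t⟫ ≥ ⟪w*, q_t⟫ + α(⟪w*, p_t⟫ − ⟪w*, q_t⟫) − ξ_t holds for all t. Then the average regret satisfies (1/T) · Σ_{t=1}^T (⟪w*, p_t⟫ − ⟪w*, q_t⟫) ≤ 2·C·‖w*‖/(α·√T) + (1/(α·T)) · Σ_{t=1}^T ξ_t. -/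
open scoped InnerProductSpace BigOperators

/-!
Write `d t = b t - q t`, so that `w (T + 1) = ∑ t, d t`. Because the algorithm predicts the
trajectory maximising its current score, `⟪w t, d t⟫ ≤ 0`, so `‖w (t + 1)‖²` grows by at most
`‖d t‖² ≤ 4 C²` per round and `‖w (T + 1)‖ ≤ 2 C √T`. On the other hand α-informativeness gives
`⟪w*, d t⟫ ≥ α · regret_t - ξ t`; summing and applying Cauchy–Schwarz to `⟪w*, w (T + 1)⟫`
yields `α · ∑ regret - ∑ ξ ≤ 2 C ‖w*‖ √T`, and dividing by `α T` gives the bound.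
-/

theorem eq_add_sum_Icc_of_succ_eq_add {M : Type*} [AddCommMonoid M] {w d : ℕ → M} {n : ℕ}
    (hupd : ∀ t, 1 ≤ t → t ≤ n → w (t + 1) = w t + d t) :
    w (n + 1) = w 1 + ∑ t ∈ Finset.Icc 1 n, d t := by
  induction n with
  | zero => simp
  | succ n ih =>
    rw [Finset.sum_Icc_succ_top (by omega), ← add_assoc,
      ← ih fun t h1 h2 => hupd t h1 (by omega), hupd (n + 1) (by omega) le_rfl]

section Perceptron

variable {H : Type*} [NormedAddCommGroup H] [InnerProductSpace ℝ H]

theorem norm_add_sq_le_of_inner_nonpos {x y : H} (h : ⟪x, y⟫_ℝ ≤ 0) :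
    ‖x + y‖ ^ 2 ≤ ‖x‖ ^ 2 + ‖y‖ ^ 2 := by
  rw [norm_add_sq_real]
  linarith

variable {w d : ℕ → H} {n : ℕ}

theorem norm_sq_le_of_inner_step_nonpos {D : ℝ}
    (hupd : ∀ t, 1 ≤ t → t ≤ n → w (t + 1) = w t + d t)
    (hinner : ∀ t, 1 ≤ t → t ≤ n → ⟪w t, d t⟫_ℝ ≤ 0)
    (hd : ∀ t, 1 ≤ t → t ≤ n → ‖d t‖ ≤ D) :
    ‖w (n + 1)‖ ^ 2 ≤ ‖w 1‖ ^ 2 + n * D ^ 2 := by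
  induction n with
  | zero => simp
  | succ n ih =>
    have hprev := ih (fun t h1 h2 => hupd t h1 (by omega))
      (fun t h1 h2 => hinner t h1 (by omega)) (fun t h1 h2 => hd t h1 (by omega))
    have hstep := norm_add_sq_le_of_inner_nonpos (hinner (n + 1) (by omega) le_rfl)
    have hdsq : ‖d (n + 1)‖ ^ 2 ≤ D ^ 2 :=
      pow_le_pow_left₀ (norm_nonneg _) (hd (n + 1) (by omega) le_rfl) 2
    rw [hupd (n + 1) (by omega) le_rfl]
    push_cast
    linarith

theorem norm_le_sqrt_mul_of_inner_step_nonpos {D : ℝ} (hD : 0 ≤ D) (hw1 : w 1 = 0)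
    (hupd : ∀ t, 1 ≤ t → t ≤ n → w (t + 1) = w t + d t)
    (hinner : ∀ t, 1 ≤ t → t ≤ n → ⟪w t, d t⟫_ℝ ≤ 0)
    (hd : ∀ t, 1 ≤ t → t ≤ n → ‖d t‖ ≤ D) :
    ‖w (n + 1)‖ ≤ Real.sqrt n * D := by
  have hsq := norm_sq_le_of_inner_step_nonpos hupd hinner hd
  rw [hw1, norm_zero, zero_pow two_ne_zero, zero_add] at hsq
  calc ‖w (n + 1)‖ = Real.sqrt (‖w (n + 1)‖ ^ 2) := (Real.sqrt_sq (norm_nonneg _)).symm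
    _ ≤ Real.sqrt (n * D ^ 2) := Real.sqrt_le_sqrt hsq
    _ = Real.sqrt n * D := by rw [Real.sqrt_mul (Nat.cast_nonneg n), Real.sqrt_sq hD]

end Perceptron

theorem div_le_div_mul_sqrt_add {α T R Ξ K : ℝ} (hα : 0 < α) (hT : 0 < T)
    (h : α * R - Ξ ≤ K * Real.sqrt T) :
    1 / T * R ≤ K / (α * Real.sqrt T) + 1 / (α * T) * Ξ := by
  have hsT : 0 < Real.sqrt T := Real.sqrt_pos.mpr hT
  have hK : K / (α * Real.sqrt T) = K * Real.sqrt T / (α * T) := by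
    field_simp
    rw [Real.sq_sqrt hT.le]
  rw [hK, one_div_mul_eq_div, one_div_mul_eq_div, ← add_div,
    div_le_div_iff₀ hT (mul_pos hα hT)]
  nlinarith

theorem tpp_average_regret_bound_general
    {H : Type*} [NormedAddCommGroup H] [InnerProductSpace ℝ H]
    (wstar : H) (C : ℝ) (hC : 0 ≤ C) (T : ℕ) (hT : 1 ≤ T)
    (α : ℝ) (hα0 : 0 < α)
    (p q b : ℕ → H) (ξ : ℕ → ℝ)
    (hq : ∀ t, 1 ≤ t → t ≤ T → ‖q t‖ ≤ C)
    (hb : ∀ t, 1 ≤ t → t ≤ T → ‖b t‖ ≤ C)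
    (w : ℕ → H) (hw1 : w 1 = 0)
    (hwupd : ∀ t, 1 ≤ t → t ≤ T → w (t + 1) = w t + b t - q t)
    (hpred : ∀ t, 1 ≤ t → t ≤ T → ⟪w t, b t⟫_ℝ ≤ ⟪w t, q t⟫_ℝ)
    (hfeed : ∀ t, 1 ≤ t → t ≤ T →
      ⟪wstar, q t⟫_ℝ + α * (⟪wstar, p t⟫_ℝ - ⟪wstar, q t⟫_ℝ) - ξ t ≤ ⟪wstar, b t⟫_ℝ) :
    (1 / (T : ℝ)) * ∑ t ∈ Finset.Icc 1 T, (⟪wstar, p t⟫_ℝ - ⟪wstar, q t⟫_ℝ) ≤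
      2 * C * ‖wstar‖ / (α * Real.sqrt T) +
        (1 / (α * T)) * ∑ t ∈ Finset.Icc 1 T, ξ t := by
  have hupd : ∀ t, 1 ≤ t → t ≤ T → w (t + 1) = w t + (b t - q t) := fun t h1 h2 => by
    rw [hwupd t h1 h2, add_sub_assoc]
  have hnorm : ‖w (T + 1)‖ ≤ Real.sqrt T * (2 * C) :=
    norm_le_sqrt_mul_of_inner_step_nonpos (by linarith) hw1 hupd
      (fun t h1 h2 => by rw [inner_sub_right]; linarith [hpred t h1 h2])
      (fun t h1 h2 => (norm_sub_le _ _).trans (by linarith [hb t h1 h2, hq t h1 h2]))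
  have hprogress : α * ∑ t ∈ Finset.Icc 1 T, (⟪wstar, p t⟫_ℝ - ⟪wstar, q t⟫_ℝ) -
      ∑ t ∈ Finset.Icc 1 T, ξ t ≤ ⟪wstar, w (T + 1)⟫_ℝ := by
    rw [eq_add_sum_Icc_of_succ_eq_add hupd, hw1, zero_add, inner_sum, Finset.mul_sum,
      ← Finset.sum_sub_distrib]
    exact Finset.sum_le_sum fun t ht => by
      rw [Finset.mem_Icc] at ht
      rw [inner_sub_right]
      linarith [hfeed t ht.1 ht.2]
  refine div_le_div_mul_sqrt_add hα0 (by exact_mod_cast hT) (hprogress.trans ?_)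
  calc ⟪wstar, w (T + 1)⟫_ℝ ≤ ‖wstar‖ * ‖w (T + 1)‖ := real_inner_le_norm _ _
    _ ≤ ‖wstar‖ * (Real.sqrt T * (2 * C)) := by gcongr
    _ = 2 * C * ‖wstar‖ * Real.sqrt T := by ring

/-- Average regret bound for the trajectory preference perceptron under
strictly α-informative feedback. -/
theorem tpp_average_regret_bound
    {H : Type*} [NormedAddCommGroup H] [InnerProductSpace ℝ H]
    (wstar : H) (C : ℝ) (hC : 0 ≤ C) (T : ℕ) (hT : 1 ≤ T)
    (α : ℝ) (hα0 : 0 < α) (hα1 : α ≤ 1)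
    (p q b : ℕ → H) (ξ : ℕ → ℝ)
    (hp : ∀ t, 1 ≤ t → t ≤ T → ‖p t‖ ≤ C)
    (hq : ∀ t, 1 ≤ t → t ≤ T → ‖q t‖ ≤ C)
    (hb : ∀ t, 1 ≤ t → t ≤ T → ‖b t‖ ≤ C)
    (w : ℕ → H) (hw1 : w 1 = 0)
    (hwupd : ∀ t, 1 ≤ t → t ≤ T → w (t + 1) = w t + b t - q t)
    (hpred : ∀ t, 1 ≤ t → t ≤ T → ⟪w t, b t⟫_ℝ ≤ ⟪w t, q t⟫_ℝ)
    (hfeed : ∀ t, 1 ≤ t → t ≤ T →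
      ⟪wstar, q t⟫_ℝ + α * (⟪wstar, p t⟫_ℝ - ⟪wstar, q t⟫_ℝ) - ξ t ≤ ⟪wstar, b t⟫_ℝ) :
    (1 / (T : ℝ)) * ∑ t ∈ Finset.Icc 1 T, (⟪wstar, p t⟫_ℝ - ⟪wstar, q t⟫_ℝ) ≤
      2 * C * ‖wstar‖ / (α * Real.sqrt T) +
        (1 / (α * T)) * ∑ t ∈ Finset.Icc 1 T, ξ t :=
  tpp_average_regret_bound_general wstar C hC T hT α hα0 p q b ξ hq hb w hw1 hwupd hpred hfeed
end

section
/- Let H be a real inner product space, w* ∈ H, C ≥ 0, and T ≥ 1. For t = 1,…,T let q_t, b_t ∈ H with ‖q_t‖ ≤ C and ‖b_t‖ ≤ C. Define w_1 = 0 and w_{t+1} = w_t + b_t − q_t, and assume ⟪w_t, q_t⟫ ≥ ⟪w_t, b_t⟫ for all t = 1,…,T. Then Σ_{t=1}^T (⟪w*, b_t⟫ − ⟪w*, q_t⟫) ≤ 2·C·√T·‖w*‖. -/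
open scoped InnerProductSpace BigOperators

/-- Cumulative score improvement bound for the trajectory preference perceptron. -/
theorem tpp_cumulative_improvement_bound
    {H : Type*} [NormedAddCommGroup H] [InnerProductSpace ℝ H]
    (wstar : H) (C : ℝ) (hC : 0 ≤ C) (T : ℕ) (hT : 1 ≤ T)
    (q b : ℕ → H)
    (hq : ∀ t, 1 ≤ t → t ≤ T → ‖q t‖ ≤ C)
    (hb : ∀ t, 1 ≤ t → t ≤ T → ‖b t‖ ≤ C)
    (w : ℕ → H) (hw1 : w 1 = 0)
    (hwupd : ∀ t, 1 ≤ t → t ≤ T → w (t + 1) = w t + b t - q t)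
    (hpred : ∀ t, 1 ≤ t → t ≤ T → ⟪w t, b t⟫_ℝ ≤ ⟪w t, q t⟫_ℝ) :
    ∑ t ∈ Finset.Icc 1 T, (⟪wstar, b t⟫_ℝ - ⟪wstar, q t⟫_ℝ) ≤
      2 * C * Real.sqrt T * ‖wstar‖ := by
  -- w (n+1) = sum of (b t - q t)
  have hsum : ∀ n, n ≤ T → w (n + 1) = ∑ t ∈ Finset.Icc 1 n, (b t - q t) := by
    intro n hn
    induction n with
    | zero => simpa using hw1
    | succ k ih =>
      have hk : k ≤ T := Nat.le_of_succ_le hn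
      rw [hwupd (k + 1) (Nat.succ_le_succ (Nat.zero_le _)) hn,
        Finset.sum_Icc_succ_top (Nat.succ_le_succ (Nat.zero_le _)), ← ih hk]
      abel
  -- norm squared bound
  have hnormsq : ∀ n, n ≤ T → ‖w (n + 1)‖ ^ 2 ≤ 4 * C ^ 2 * n := by
    intro n hn
    induction n with
    | zero =>
      have : w 1 = 0 := hw1
      simp [this]
    | succ k ih =>
      have hk : k ≤ T := Nat.le_of_succ_le hn
      have h1 : 1 ≤ k + 1 := Nat.succ_le_succ (Nat.zero_le _)
      rw [hwupd (k + 1) h1 hn]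
      have hexp : ‖w (k + 1) + b (k + 1) - q (k + 1)‖ ^ 2 =
          ‖w (k + 1)‖ ^ 2 + 2 * ⟪w (k + 1), b (k + 1) - q (k + 1)⟫_ℝ
            + ‖b (k + 1) - q (k + 1)‖ ^ 2 := by
        rw [add_sub_assoc, @norm_add_sq_real H _ _ (w (k + 1)) (b (k + 1) - q (k + 1))]
      rw [hexp]
      have hinner : ⟪w (k + 1), b (k + 1) - q (k + 1)⟫_ℝ ≤ 0 := by
        rw [inner_sub_right]
        have := hpred (k + 1) h1 hn
        linarith
      have hbq : ‖b (k + 1) - q (k + 1)‖ ^ 2 ≤ 4 * C ^ 2 := by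
        have h2 : ‖b (k + 1) - q (k + 1)‖ ≤ 2 * C := by
          calc ‖b (k + 1) - q (k + 1)‖ ≤ ‖b (k + 1)‖ + ‖q (k + 1)‖ := norm_sub_le _ _
            _ ≤ 2 * C := by
              have := hb (k + 1) h1 hn
              have := hq (k + 1) h1 hn
              linarith
        calc ‖b (k + 1) - q (k + 1)‖ ^ 2 ≤ (2 * C) ^ 2 :=
              pow_le_pow_left₀ (norm_nonneg _) h2 2
          _ = 4 * C ^ 2 := by ring
      have := ih hk
      push_cast
      push_cast at this
      nlinarith
  -- norm bound at T
  have hnorm : ‖w (T + 1)‖ ≤ 2 * C * Real.sqrt T := by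
    have h := hnormsq T le_rfl
    have h2 : ‖w (T + 1)‖ ^ 2 ≤ (2 * C * Real.sqrt T) ^ 2 := by
      have hsq : (2 * C * Real.sqrt T) ^ 2 = 4 * C ^ 2 * T := by
        rw [mul_pow, mul_pow, Real.sq_sqrt (by positivity : (0:ℝ) ≤ (T:ℝ))]
        ring
      rw [hsq]; exact h
    calc ‖w (T + 1)‖ = Real.sqrt (‖w (T + 1)‖ ^ 2) := (Real.sqrt_sq (norm_nonneg _)).symm
      _ ≤ Real.sqrt ((2 * C * Real.sqrt T) ^ 2) := Real.sqrt_le_sqrt h2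
      _ = 2 * C * Real.sqrt T := Real.sqrt_sq (by positivity)
  calc ∑ t ∈ Finset.Icc 1 T, (⟪wstar, b t⟫_ℝ - ⟪wstar, q t⟫_ℝ)
      = ⟪wstar, w (T + 1)⟫_ℝ := by
        rw [hsum T le_rfl, inner_sum]
        exact Finset.sum_congr rfl fun t _ => (inner_sub_right _ _ _).symm
    _ ≤ ‖wstar‖ * ‖w (T + 1)‖ := real_inner_le_norm _ _
    _ ≤ ‖wstar‖ * (2 * C * Real.sqrt T) := by
        exact mul_le_mul_of_nonneg_left hnorm (norm_nonneg _)
    _ = 2 * C * Real.sqrt T * ‖wstar‖ := by ring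
end

section
/- Let (Ω, μ) be a probability space, H a real inner product space (finite-dimensional or a separable Hilbert space), w* ∈ H, C ≥ 0, and T ≥ 1. For t = 1,…,T let q_t, b_t : Ω → H be strongly measurable with ‖q_t(ω)‖ ≤ C and ‖b_t(ω)‖ ≤ C for all ω. Define w_1(ω) = 0 and w_{t+1}(ω) = w_t(ω) + b_t(ω) − q_t(ω), and assume ⟪w_t(ω), q_t(ω)⟫ ≥ ⟪w_t(ω), b_t(ω)⟫ for all ω and all t = 1,…,T. Then Σ_{t=1}^T E[⟪w*, b_t⟫ − ⟪w*, q_t⟫] ≤ 2·C·√T·‖w*‖. -/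
open scoped InnerProductSpace BigOperators
open MeasureTheory

/-- Expected cumulative score improvement bound for the trajectory preference
perceptron in the randomized-feedback setting. -/
theorem tpp_expected_cumulative_improvement_bound
    {Ω : Type*} [MeasurableSpace Ω] (μ : Measure Ω) [IsProbabilityMeasure μ]
    {H : Type*} [NormedAddCommGroup H] [InnerProductSpace ℝ H]
    [CompleteSpace H] [SecondCountableTopology H]
    (wstar : H) (C : ℝ) (hC : 0 ≤ C) (T : ℕ) (hT : 1 ≤ T)
    (q b : ℕ → Ω → H)
    (hqm : ∀ t, 1 ≤ t → t ≤ T → StronglyMeasurable (q t))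
    (hbm : ∀ t, 1 ≤ t → t ≤ T → StronglyMeasurable (b t))
    (hq : ∀ t, 1 ≤ t → t ≤ T → ∀ ω, ‖q t ω‖ ≤ C)
    (hb : ∀ t, 1 ≤ t → t ≤ T → ∀ ω, ‖b t ω‖ ≤ C)
    (w : ℕ → Ω → H) (hw1 : ∀ ω, w 1 ω = 0)
    (hwupd : ∀ t, 1 ≤ t → t ≤ T → ∀ ω, w (t + 1) ω = w t ω + b t ω - q t ω)
    (hpred : ∀ t, 1 ≤ t → t ≤ T → ∀ ω, ⟪w t ω, b t ω⟫_ℝ ≤ ⟪w t ω, q t ω⟫_ℝ) :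
    ∑ t ∈ Finset.Icc 1 T, (∫ ω, (⟪wstar, b t ω⟫_ℝ - ⟪wstar, q t ω⟫_ℝ) ∂μ) ≤
      2 * C * Real.sqrt T * ‖wstar‖ := by
  -- telescoping: sum of increments equals w (n+1)
  have htel : ∀ ω, ∀ n ≤ T, ∑ t ∈ Finset.Icc 1 n, (b t ω - q t ω) = w (n + 1) ω := by
    intro ω n
    induction n with
    | zero => intro _; simp [hw1 ω]
    | succ n ih =>
      intro hn
      rw [Finset.sum_Icc_succ_top (by omega : 1 ≤ n + 1),
        ih (by omega), hwupd (n + 1) (by omega) hn ω]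
      abel
  -- norm bound: ‖w (n+1)‖² ≤ (2C)² n
  have hnorm : ∀ ω, ∀ n ≤ T, ‖w (n + 1) ω‖ ^ 2 ≤ (2 * C) ^ 2 * n := by
    intro ω n
    induction n with
    | zero => intro _; simp [hw1 ω]
    | succ n ih =>
      intro hn
      have h1 : 1 ≤ n + 1 := by omega
      have hupd := hwupd (n + 1) h1 hn ω
      have : w (n + 1 + 1) ω = w (n + 1) ω + (b (n + 1) ω - q (n + 1) ω) := by
        rw [hupd]; abel
      rw [this]
      have hsq : ‖w (n + 1) ω + (b (n + 1) ω - q (n + 1) ω)‖ ^ 2 =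
          ‖w (n + 1) ω‖ ^ 2 + 2 * ⟪w (n + 1) ω, b (n + 1) ω - q (n + 1) ω⟫_ℝ +
          ‖b (n + 1) ω - q (n + 1) ω‖ ^ 2 := by
        rw [@norm_add_sq_real]
      rw [hsq]
      have hinner : ⟪w (n + 1) ω, b (n + 1) ω - q (n + 1) ω⟫_ℝ ≤ 0 := by
        rw [inner_sub_right]
        have := hpred (n + 1) h1 hn ω
        linarith
      have hdn : ‖b (n + 1) ω - q (n + 1) ω‖ ≤ 2 * C := by
        calc ‖b (n + 1) ω - q (n + 1) ω‖ ≤ ‖b (n + 1) ω‖ + ‖q (n + 1) ω‖ := norm_sub_le _ _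
        _ ≤ 2 * C := by have := hb (n + 1) h1 hn ω; have := hq (n + 1) h1 hn ω; linarith
      have hdn2 : ‖b (n + 1) ω - q (n + 1) ω‖ ^ 2 ≤ (2 * C) ^ 2 :=
        pow_le_pow_left₀ (norm_nonneg _) hdn 2
      have := ih (by omega)
      push_cast
      nlinarith
  -- pointwise bound for the summed integrand
  have hpt : ∀ ω, ∑ t ∈ Finset.Icc 1 T, (⟪wstar, b t ω⟫_ℝ - ⟪wstar, q t ω⟫_ℝ) ≤
      2 * C * Real.sqrt T * ‖wstar‖ := by
    intro ω
    have hsum : ∑ t ∈ Finset.Icc 1 T, (⟪wstar, b t ω⟫_ℝ - ⟪wstar, q t ω⟫_ℝ) =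
        ⟪wstar, w (T + 1) ω⟫_ℝ := by
      rw [← htel ω T le_rfl, inner_sum]
      exact Finset.sum_congr rfl fun t _ => by rw [inner_sub_right]
    rw [hsum]
    have hwn : ‖w (T + 1) ω‖ ≤ 2 * C * Real.sqrt T := by
      have h2 := hnorm ω T le_rfl
      have h3 : (0:ℝ) ≤ 2 * C * Real.sqrt T := by positivity
      nlinarith [norm_nonneg (w (T + 1) ω), Real.sq_sqrt (Nat.cast_nonneg T : (0:ℝ) ≤ T),
        Real.sqrt_nonneg (T:ℝ)]
    calc ⟪wstar, w (T + 1) ω⟫_ℝ ≤ ‖wstar‖ * ‖w (T + 1) ω‖ := real_inner_le_norm _ _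
    _ ≤ ‖wstar‖ * (2 * C * Real.sqrt T) := by
        exact mul_le_mul_of_nonneg_left hwn (norm_nonneg _)
    _ = 2 * C * Real.sqrt T * ‖wstar‖ := by ring
  -- integrability of each term
  have hint : ∀ t ∈ Finset.Icc 1 T,
      Integrable (fun ω => ⟪wstar, b t ω⟫_ℝ - ⟪wstar, q t ω⟫_ℝ) μ := by
    intro t ht
    rw [Finset.mem_Icc] at ht
    have hm : AEStronglyMeasurable (fun ω => ⟪wstar, b t ω⟫_ℝ - ⟪wstar, q t ω⟫_ℝ) μ := by
      exact ((stronglyMeasurable_const.inner (hbm t ht.1 ht.2)).sub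
        (stronglyMeasurable_const.inner (hqm t ht.1 ht.2))).aestronglyMeasurable
    refine (integrable_const (2 * C * ‖wstar‖)).mono' hm ?_
    filter_upwards with ω
    have h1 : |⟪wstar, b t ω⟫_ℝ| ≤ ‖wstar‖ * C := by
      refine (abs_real_inner_le_norm _ _).trans ?_
      exact mul_le_mul_of_nonneg_left (hb t ht.1 ht.2 ω) (norm_nonneg _)
    have h2 : |⟪wstar, q t ω⟫_ℝ| ≤ ‖wstar‖ * C := by
      refine (abs_real_inner_le_norm _ _).trans ?_
      exact mul_le_mul_of_nonneg_left (hq t ht.1 ht.2 ω) (norm_nonneg _)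
    rw [Real.norm_eq_abs]
    calc |⟪wstar, b t ω⟫_ℝ - ⟪wstar, q t ω⟫_ℝ| ≤
        |⟪wstar, b t ω⟫_ℝ| + |⟪wstar, q t ω⟫_ℝ| := abs_sub _ _
    _ ≤ 2 * C * ‖wstar‖ := by linarith
  rw [← integral_finset_sum _ hint]
  calc (∫ ω, ∑ t ∈ Finset.Icc 1 T, (⟪wstar, b t ω⟫_ℝ - ⟪wstar, q t ω⟫_ℝ) ∂μ) ≤
      ∫ _, 2 * C * Real.sqrt T * ‖wstar‖ ∂μ := by
        refine integral_mono (integrable_finset_sum _ hint) (integrable_const _) hpt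
  _ = 2 * C * Real.sqrt T * ‖wstar‖ := by simp
end

section
/- Let (Ω, μ) be a probability space, H a real inner product space (finite-dimensional or a separable Hilbert space), w* ∈ H, C ≥ 0, T ≥ 1, and α ∈ (0,1]. For t = 1,…,T let p_t, q_t, b_t : Ω → H be strongly measurable with ‖p_t(ω)‖ ≤ C, ‖q_t(ω)‖ ≤ C, ‖b_t(ω)‖ ≤ C for all ω, and let ξ̄_t ∈ ℝ. Define w_1(ω) = 0 and w_{t+1}(ω) = w_t(ω) + b_t(ω) − q_t(ω), assume ⟪w_t(ω), q_t(ω)⟫ ≥ ⟪w_t(ω), b_t(ω)⟫ for all ω and all t, and assume the expected α-informative feedback condition: E[⟪w*, b_t⟫] ≥ E[⟪w*, q_t⟫] + α·E[⟪w*, p_t⟫ − ⟪w*, q_t⟫] − ξ̄_t for all t = 1,…,T. Then the expected average regret satisfies (1/T) · Σ_{t=1}^T E[⟪w*, p_t⟫ − ⟪w*, q_t⟫] ≤ 2·C·‖w*‖/(α·√T) + (1/(α·T)) · Σ_{t=1}^T ξ̄_t. -/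
/-!
The perceptron's weight after `T` rounds is `w_{T+1} = ∑ (b_t - q_t)`, so the cumulative expected
gain `∑ E[⟪w*, b_t⟫ - ⟪w*, q_t⟫]` equals `E⟪w*, w_{T+1}⟫ ≤ ‖w*‖ · sup_ω ‖w_{T+1}(ω)‖`. Because the
algorithm predicts `q_t` as the maximiser, `⟪w_t, b_t - q_t⟫ ≤ 0`, hence each update raises
`‖w_t‖²` by at most `‖b_t - q_t‖² ≤ (2C)²`, and `‖w_{T+1}‖ ≤ 2C√T`. Summing the α-informative
feedback inequalities bounds `α` times the cumulative regret by this gain plus `∑ ξ̄_t`.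
-/

open scoped InnerProductSpace
open MeasureTheory Finset

theorem perceptron_weight_eq_sum {G : Type*} [AddCommGroup G] (w b q : ℕ → G) (n : ℕ)
    (hw1 : w 1 = 0) (hwupd : ∀ t, 1 ≤ t → t ≤ n → w (t + 1) = w t + b t - q t) :
    w (n + 1) = ∑ t ∈ Icc 1 n, (b t - q t) := by
  induction n with
  | zero => simp [hw1]
  | succ n ih =>
    rw [hwupd (n + 1) (by omega) le_rfl, ih (fun t h1 h2 => hwupd t h1 (by omega)),
      sum_Icc_succ_top (by omega)]
    abel

section Perceptron

variable {H : Type*} [NormedAddCommGroup H] [InnerProductSpace ℝ H]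

theorem norm_sq_le_of_inner_increment_nonpos (w : ℕ → H) (D : ℝ) (n : ℕ)
    (hinner : ∀ t, 1 ≤ t → t ≤ n → ⟪w t, w (t + 1) - w t⟫_ℝ ≤ 0)
    (hstep : ∀ t, 1 ≤ t → t ≤ n → ‖w (t + 1) - w t‖ ≤ D) :
    ‖w (n + 1)‖ ^ 2 ≤ ‖w 1‖ ^ 2 + n * D ^ 2 := by
  induction n with
  | zero => simp
  | succ n ih =>
    have hprev := ih (fun t h1 h2 => hinner t h1 (by omega)) (fun t h1 h2 => hstep t h1 (by omega))
    have hsq : ‖w (n + 1 + 1) - w (n + 1)‖ ^ 2 ≤ D ^ 2 :=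
      pow_le_pow_left₀ (norm_nonneg _) (hstep (n + 1) (by omega) le_rfl) 2
    have hexpand := norm_add_sq_real (w (n + 1)) (w (n + 1 + 1) - w (n + 1))
    rw [add_sub_cancel] at hexpand
    push_cast
    linarith [hinner (n + 1) (by omega) le_rfl]

variable (w b q : ℕ → H)

theorem perceptron_norm_le (C : ℝ) (hC : 0 ≤ C) (n : ℕ) (hw1 : w 1 = 0)
    (hwupd : ∀ t, 1 ≤ t → t ≤ n → w (t + 1) = w t + b t - q t)
    (hpred : ∀ t, 1 ≤ t → t ≤ n → ⟪w t, b t⟫_ℝ ≤ ⟪w t, q t⟫_ℝ)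
    (hb : ∀ t, 1 ≤ t → t ≤ n → ‖b t‖ ≤ C) (hq : ∀ t, 1 ≤ t → t ≤ n → ‖q t‖ ≤ C) :
    ‖w (n + 1)‖ ≤ 2 * C * √n := by
  have hincr : ∀ t, 1 ≤ t → t ≤ n → w (t + 1) - w t = b t - q t := fun t h1 h2 => by
    rw [hwupd t h1 h2]; abel
  have hsq := norm_sq_le_of_inner_increment_nonpos w (2 * C) n
    (fun t h1 h2 => by rw [hincr t h1 h2, inner_sub_right]; linarith [hpred t h1 h2])
    (fun t h1 h2 => by
      rw [hincr t h1 h2]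
      linarith [norm_sub_le (b t) (q t), hb t h1 h2, hq t h1 h2])
  rw [hw1, norm_zero, zero_pow two_ne_zero, zero_add] at hsq
  calc ‖w (n + 1)‖ = √(‖w (n + 1)‖ ^ 2) := (Real.sqrt_sq (norm_nonneg _)).symm
    _ ≤ √(n * (2 * C) ^ 2) := Real.sqrt_le_sqrt hsq
    _ = 2 * C * √n := by
      rw [Real.sqrt_mul (Nat.cast_nonneg n), Real.sqrt_sq (by positivity), mul_comm]

theorem perceptron_sum_inner_sub_le (v : H) (C : ℝ) (hC : 0 ≤ C) (n : ℕ) (hw1 : w 1 = 0)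
    (hwupd : ∀ t, 1 ≤ t → t ≤ n → w (t + 1) = w t + b t - q t)
    (hpred : ∀ t, 1 ≤ t → t ≤ n → ⟪w t, b t⟫_ℝ ≤ ⟪w t, q t⟫_ℝ)
    (hb : ∀ t, 1 ≤ t → t ≤ n → ‖b t‖ ≤ C) (hq : ∀ t, 1 ≤ t → t ≤ n → ‖q t‖ ≤ C) :
    ∑ t ∈ Icc 1 n, (⟪v, b t⟫_ℝ - ⟪v, q t⟫_ℝ) ≤ 2 * C * ‖v‖ * √n :=
  calc ∑ t ∈ Icc 1 n, (⟪v, b t⟫_ℝ - ⟪v, q t⟫_ℝ) = ⟪v, w (n + 1)⟫_ℝ := by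
        simp only [perceptron_weight_eq_sum w b q n hw1 hwupd, inner_sum, inner_sub_right]
    _ ≤ ‖v‖ * ‖w (n + 1)‖ := real_inner_le_norm _ _
    _ ≤ ‖v‖ * (2 * C * √n) := by
        gcongr; exact perceptron_norm_le w b q C hC n hw1 hwupd hpred hb hq
    _ = 2 * C * ‖v‖ * √n := by ring

end Perceptron

theorem sum_integral_le_of_forall_sum_le {Ω ι : Type*} [MeasurableSpace Ω] (μ : Measure Ω)
    [IsProbabilityMeasure μ] (s : Finset ι) (f : ι → Ω → ℝ) (B : ℝ)
    (hf : ∀ i ∈ s, Integrable (f i) μ) (h : ∀ ω, ∑ i ∈ s, f i ω ≤ B) :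
    ∑ i ∈ s, ∫ ω, f i ω ∂μ ≤ B := by
  rw [← integral_finsetSum s hf]
  calc ∫ ω, ∑ i ∈ s, f i ω ∂μ ≤ ∫ _, B ∂μ :=
        integral_mono (integrable_finsetSum s hf) (integrable_const B) h
    _ = B := by simp

theorem average_le_of_mul_le_add {α G : ℝ} (hα : 0 < α) (T : ℕ) (r g ξ : ℕ → ℝ)
    (hr : ∀ t, 1 ≤ t → t ≤ T → α * r t ≤ g t + ξ t) (hg : ∑ t ∈ Icc 1 T, g t ≤ G) :
    (1 / (T : ℝ)) * ∑ t ∈ Icc 1 T, r t ≤ G / (α * T) + (1 / (α * T)) * ∑ t ∈ Icc 1 T, ξ t := by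
  have hsum : α * ∑ t ∈ Icc 1 T, r t ≤ G + ∑ t ∈ Icc 1 T, ξ t :=
    calc α * ∑ t ∈ Icc 1 T, r t ≤ ∑ t ∈ Icc 1 T, (g t + ξ t) := by
          rw [mul_sum]
          exact sum_le_sum fun t ht => hr t (mem_Icc.1 ht).1 (mem_Icc.1 ht).2
      _ ≤ G + ∑ t ∈ Icc 1 T, ξ t := by rw [sum_add_distrib]; gcongr
  calc (1 / (T : ℝ)) * ∑ t ∈ Icc 1 T, r t = (1 / (α * T)) * (α * ∑ t ∈ Icc 1 T, r t) := by
        field_simp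
    _ ≤ (1 / (α * T)) * (G + ∑ t ∈ Icc 1 T, ξ t) := by gcongr
    _ = G / (α * T) + (1 / (α * T)) * ∑ t ∈ Icc 1 T, ξ t := by ring

theorem tpp_expected_average_regret_bound_general
    {Ω : Type*} [MeasurableSpace Ω] (μ : Measure Ω) [IsProbabilityMeasure μ]
    {H : Type*} [NormedAddCommGroup H] [InnerProductSpace ℝ H]
    (wstar : H) (C : ℝ) (hC : 0 ≤ C) (T : ℕ)
    (α : ℝ) (hα0 : 0 < α)
    (p q b : ℕ → Ω → H) (ξ : ℕ → ℝ)
    (hqm : ∀ t, 1 ≤ t → t ≤ T → StronglyMeasurable (q t))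
    (hbm : ∀ t, 1 ≤ t → t ≤ T → StronglyMeasurable (b t))
    (hq : ∀ t, 1 ≤ t → t ≤ T → ∀ ω, ‖q t ω‖ ≤ C)
    (hb : ∀ t, 1 ≤ t → t ≤ T → ∀ ω, ‖b t ω‖ ≤ C)
    (w : ℕ → Ω → H) (hw1 : ∀ ω, w 1 ω = 0)
    (hwupd : ∀ t, 1 ≤ t → t ≤ T → ∀ ω, w (t + 1) ω = w t ω + b t ω - q t ω)
    (hpred : ∀ t, 1 ≤ t → t ≤ T → ∀ ω, ⟪w t ω, b t ω⟫_ℝ ≤ ⟪w t ω, q t ω⟫_ℝ)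
    (hfeed : ∀ t, 1 ≤ t → t ≤ T →
      (∫ ω, ⟪wstar, q t ω⟫_ℝ ∂μ) +
        α * (∫ ω, (⟪wstar, p t ω⟫_ℝ - ⟪wstar, q t ω⟫_ℝ) ∂μ) - ξ t ≤
        ∫ ω, ⟪wstar, b t ω⟫_ℝ ∂μ) :
    (1 / (T : ℝ)) *
        ∑ t ∈ Finset.Icc 1 T, (∫ ω, (⟪wstar, p t ω⟫_ℝ - ⟪wstar, q t ω⟫_ℝ) ∂μ) ≤
      2 * C * ‖wstar‖ / (α * Real.sqrt T) +
        (1 / (α * T)) * ∑ t ∈ Finset.Icc 1 T, ξ t := by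
  have hint : ∀ f : ℕ → Ω → H, (∀ t, 1 ≤ t → t ≤ T → StronglyMeasurable (f t)) →
      (∀ t, 1 ≤ t → t ≤ T → ∀ ω, ‖f t ω‖ ≤ C) →
      ∀ t ∈ Icc 1 T, Integrable (fun ω => ⟪wstar, f t ω⟫_ℝ) μ := fun f hm hbd t ht =>
    (Integrable.of_bound (hm t (mem_Icc.1 ht).1 (mem_Icc.1 ht).2).aestronglyMeasurable C
      (ae_of_all _ (hbd t (mem_Icc.1 ht).1 (mem_Icc.1 ht).2))).const_inner wstar
  have hgain : ∑ t ∈ Icc 1 T, ((∫ ω, ⟪wstar, b t ω⟫_ℝ ∂μ) - ∫ ω, ⟪wstar, q t ω⟫_ℝ ∂μ) ≤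
      2 * C * ‖wstar‖ * √T := by
    rw [sum_congr rfl fun t ht => (integral_sub (hint b hbm hb t ht) (hint q hqm hq t ht)).symm]
    exact sum_integral_le_of_forall_sum_le μ _ _ _
      (fun t ht => (hint b hbm hb t ht).sub (hint q hqm hq t ht))
      fun ω => perceptron_sum_inner_sub_le (w · ω) (b · ω) (q · ω) wstar C hC T (hw1 ω)
        (fun t h1 h2 => hwupd t h1 h2 ω) (fun t h1 h2 => hpred t h1 h2 ω)
        (fun t h1 h2 => hb t h1 h2 ω) (fun t h1 h2 => hq t h1 h2 ω)
  calc _ ≤ 2 * C * ‖wstar‖ * √T / (α * T) + (1 / (α * T)) * ∑ t ∈ Icc 1 T, ξ t :=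
        average_le_of_mul_le_add hα0 T _ _ ξ (fun t h1 h2 => by linarith [hfeed t h1 h2]) hgain
    _ = 2 * C * ‖wstar‖ / α * (√T / T) + (1 / (α * T)) * ∑ t ∈ Icc 1 T, ξ t := by ring
    _ = _ := by rw [Real.sqrt_div_self']; ring

/-- Expected average regret bound for the trajectory preference perceptron
under expected α-informative feedback. -/
theorem tpp_expected_average_regret_bound
    {Ω : Type*} [MeasurableSpace Ω] (μ : Measure Ω) [IsProbabilityMeasure μ]
    {H : Type*} [NormedAddCommGroup H] [InnerProductSpace ℝ H]
    [CompleteSpace H] [SecondCountableTopology H]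
    (wstar : H) (C : ℝ) (hC : 0 ≤ C) (T : ℕ) (hT : 1 ≤ T)
    (α : ℝ) (hα0 : 0 < α) (hα1 : α ≤ 1)
    (p q b : ℕ → Ω → H) (ξ : ℕ → ℝ)
    (hpm : ∀ t, 1 ≤ t → t ≤ T → StronglyMeasurable (p t))
    (hqm : ∀ t, 1 ≤ t → t ≤ T → StronglyMeasurable (q t))
    (hbm : ∀ t, 1 ≤ t → t ≤ T → StronglyMeasurable (b t))
    (hp : ∀ t, 1 ≤ t → t ≤ T → ∀ ω, ‖p t ω‖ ≤ C)
    (hq : ∀ t, 1 ≤ t → t ≤ T → ∀ ω, ‖q t ω‖ ≤ C)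
    (hb : ∀ t, 1 ≤ t → t ≤ T → ∀ ω, ‖b t ω‖ ≤ C)
    (w : ℕ → Ω → H) (hw1 : ∀ ω, w 1 ω = 0)
    (hwupd : ∀ t, 1 ≤ t → t ≤ T → ∀ ω, w (t + 1) ω = w t ω + b t ω - q t ω)
    (hpred : ∀ t, 1 ≤ t → t ≤ T → ∀ ω, ⟪w t ω, b t ω⟫_ℝ ≤ ⟪w t ω, q t ω⟫_ℝ)
    (hfeed : ∀ t, 1 ≤ t → t ≤ T →
      (∫ ω, ⟪wstar, q t ω⟫_ℝ ∂μ) +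
        α * (∫ ω, (⟪wstar, p t ω⟫_ℝ - ⟪wstar, q t ω⟫_ℝ) ∂μ) - ξ t ≤
        ∫ ω, ⟪wstar, b t ω⟫_ℝ ∂μ) :
    (1 / (T : ℝ)) *
        ∑ t ∈ Finset.Icc 1 T, (∫ ω, (⟪wstar, p t ω⟫_ℝ - ⟪wstar, q t ω⟫_ℝ) ∂μ) ≤
      2 * C * ‖wstar‖ / (α * Real.sqrt T) +
        (1 / (α * T)) * ∑ t ∈ Finset.Icc 1 T, ξ t :=
  tpp_expected_average_regret_bound_general μ wstar C hC T α hα0 p q b ξ hqm hbm hq hb w hw1 hwupd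
    hpred hfeed
end
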